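/- arXiv:2208.12549 — 2 statements merged into one kernel-verified Lean document; each statement's English description precedes it below -/
import Mathlib

section
/- Let X be a reflexive Banach space and E : X → ℝ Fréchet differentiable with locally Lipschitz derivative and X-elliptic. Then E is bounded below and coercive, i.e. E(x) → +∞ as ‖x‖ → ∞. -/
/-!
Ellipticity gives, along the segment from `0` to `x`, the lower bound
`E x ≥ E 0 + E'(0) x + (α / s) ‖x‖ ^ s ≥ E 0 + (α / s) ‖x‖ ^ s - ‖E'(0)‖ ‖x‖`.
Since `s > 1`, the right-hand side is a function of `‖x‖` that tends to `+∞` and is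
therefore bounded below on `[0, ∞)`.
-/

open Filter Topology Bornology

section Elliptic

variable {X : Type*} [NormedAddCommGroup X] [NormedSpace ℝ X]

def IsElliptic (E' : X → X →L[ℝ] ℝ) (α s : ℝ) : Prop :=
  ∀ x y : X, α * ‖x - y‖ ^ s ≤ (E' x - E' y) (x - y)

theorem IsElliptic.mul_rpow_le_sub_apply {E' : X → X →L[ℝ] ℝ} {α s : ℝ}
    (hell : IsElliptic E' α s) (y v : X) {t : ℝ} (ht : 0 < t) :
    α * t ^ (s - 1) * ‖v‖ ^ s ≤ E' (y + t • v) v - E' y v := by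
  have h := hell (y + t • v) y
  rw [add_sub_cancel_left, norm_smul, Real.norm_of_nonneg ht.le,
    Real.mul_rpow ht.le (norm_nonneg v), map_smul, smul_eq_mul] at h
  calc α * t ^ (s - 1) * ‖v‖ ^ s = α * (t ^ s * ‖v‖ ^ s) / t := by
        rw [Real.rpow_sub_one ht.ne']; ring
    _ ≤ E' (y + t • v) v - E' y v := by
        rw [div_le_iff₀ ht, mul_comm _ t]; simpa using h

theorem IsElliptic.apply_add_fderiv_add_rpow_le {E : X → ℝ} {E' : X → X →L[ℝ] ℝ} {α s : ℝ}
    (hell : IsElliptic E' α s) (hdiff : ∀ x, HasFDerivAt E (E' x) x) (hs : 0 < s) (x y : X) :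
    E y + E' y (x - y) + α / s * ‖x - y‖ ^ s ≤ E x := by
  set v := x - y
  -- `φ' t = E'(y + t v) v - E'(y) v - α t^(s-1) ‖v‖^s ≥ 0` by ellipticity at `(y + t v, y)`.
  let φ : ℝ → ℝ := fun t => E (y + t • v) - t * E' y v - α / s * t ^ s * ‖v‖ ^ s
  have hφ_cont : Continuous φ := by
    have hE : Continuous E := continuous_iff_continuousAt.2 fun x => (hdiff x).continuousAt
    have hpow : Continuous fun t : ℝ => t ^ s :=
      continuous_id.rpow_const fun _ => Or.inr hs.le
    fun_prop
  have hφ_deriv : ∀ t, 0 < t → HasDerivAt φ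
      (E' (y + t • v) v - E' y v - α * t ^ (s - 1) * ‖v‖ ^ s) t := by
    intro t ht
    have hpath : HasDerivAt (fun t : ℝ => y + t • v) v t := by
      simpa using ((hasDerivAt_id t).smul_const v).const_add y
    have hpow := ((Real.hasDerivAt_rpow_const (p := s) (Or.inl ht.ne')).const_mul
      (α / s)).mul_const (‖v‖ ^ s)
    refine ((((hdiff _).comp_hasDerivAt t hpath).sub
      ((hasDerivAt_id t).mul_const (E' y v))).sub hpow).congr_deriv ?_
    field_simp
  have hmono : MonotoneOn φ (Set.Icc 0 1) := by
    refine monotoneOn_of_deriv_nonneg (convex_Icc 0 1) hφ_cont.continuousOn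
      (fun t ht => ?_) fun t ht => ?_
    · rw [interior_Icc] at ht
      exact (hφ_deriv t ht.1).differentiableAt.differentiableWithinAt
    · rw [interior_Icc] at ht
      rw [(hφ_deriv t ht.1).deriv, sub_nonneg]
      exact hell.mul_rpow_le_sub_apply y v ht.1
  have := hmono (Set.left_mem_Icc.2 zero_le_one) (Set.right_mem_Icc.2 zero_le_one) zero_le_one
  have hx : y + v = x := add_sub_cancel y x
  simp only [φ, hx, zero_smul, add_zero, zero_mul, sub_zero, Real.zero_rpow hs.ne', mul_zero,
    one_smul, one_mul, Real.one_rpow] at this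
  linarith

end Elliptic

theorem tendsto_mul_rpow_sub_mul_atTop {c s : ℝ} (hc : 0 < c) (hs : 1 < s) (C : ℝ) :
    Tendsto (fun r : ℝ => c * r ^ s - C * r) atTop atTop := by
  have hfactor : Tendsto (fun r : ℝ => r * (c * r ^ (s - 1) - C)) atTop atTop :=
    tendsto_id.atTop_mul_atTop₀ <| tendsto_atTop_add_const_right _ (-C) <|
      (tendsto_rpow_atTop (sub_pos.2 hs)).const_mul_atTop hc
  refine hfactor.congr' ?_
  filter_upwards [eventually_gt_atTop 0] with r hr
  rw [Real.rpow_sub_one hr.ne']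
  field_simp

theorem ContinuousOn.bddBelow_image_Ici_of_tendsto {g : ℝ → ℝ} {a : ℝ}
    (hg : ContinuousOn g (Set.Ici a)) (hlim : Tendsto g atTop atTop) :
    BddBelow (g '' Set.Ici a) := by
  obtain ⟨R, hR⟩ := (hlim.eventually_ge_atTop (g a)).exists_forall_of_atTop
  have hcompact : BddBelow (g '' Set.Icc a R) :=
    isCompact_Icc.bddBelow_image (hg.mono Set.Icc_subset_Ici_self)
  have htail : BddBelow (g '' Set.Ici R) := ⟨g a, by rintro _ ⟨r, hr, rfl⟩; exact hR r hr⟩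
  refine (hcompact.union htail).mono ?_
  rw [← Set.image_union]
  exact Set.image_mono fun r hr => (le_total r R).imp (fun h => ⟨hr, h⟩) id

theorem stmt_2_general
{X : Type*} [NormedAddCommGroup X] [NormedSpace ℝ X]
    (E : X → ℝ) (E' : X → X →L[ℝ] ℝ)
    (hdiff : ∀ x, HasFDerivAt E (E' x) x)
    (α s : ℝ) (hα : 0 < α) (hs1 : 1 < s)
    (hell : ∀ x y : X, α * ‖x - y‖ ^ s ≤ (E' x - E' y) (x - y)) :
    (∃ m : ℝ, ∀ x : X, m ≤ E x) ∧
      Tendsto E (Filter.comap (fun x : X => ‖x‖) Filter.atTop) Filter.atTop := by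
  set g : ℝ → ℝ := fun r => α / s * r ^ s - ‖E' 0‖ * r
  have hs : 0 < s := one_pos.trans hs1
  have hE_lower : ∀ x, E 0 + g ‖x‖ ≤ E x := by
    intro x
    have h := IsElliptic.apply_add_fderiv_add_rpow_le hell hdiff hs x 0
    have hE'0 : -(‖E' 0‖ * ‖x‖) ≤ E' 0 x := neg_le_of_abs_le ((E' 0).le_opNorm x)
    simp only [sub_zero] at h
    simp only [g]
    linarith
  have hg : Tendsto g atTop atTop := tendsto_mul_rpow_sub_mul_atTop (div_pos hα hs) hs1 _
  constructor
  · have hg_cont : ContinuousOn g (Set.Ici 0) := by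
      have : ContinuousOn (fun r : ℝ => r ^ s) (Set.Ici 0) :=
        continuousOn_id.rpow_const fun _ _ => Or.inr hs.le
      fun_prop
    obtain ⟨m, hm⟩ := hg_cont.bddBelow_image_Ici_of_tendsto hg
    exact ⟨E 0 + m, fun x => by linarith [hm ⟨‖x‖, norm_nonneg x, rfl⟩, hE_lower x]⟩
  · exact tendsto_atTop_mono hE_lower (tendsto_atTop_add_const_left _ _ (hg.comp tendsto_comap))

theorem stmt_2
{X : Type*} [NormedAddCommGroup X] [NormedSpace ℝ X] [CompleteSpace X]
    (hrefl : Function.Surjective (NormedSpace.inclusionInDoubleDual ℝ X))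
    (E : X → ℝ) (E' : X → X →L[ℝ] ℝ)
    (hdiff : ∀ x, HasFDerivAt E (E' x) x)
    (hlip : LocallyLipschitz E')
    (α s : ℝ) (hα : 0 < α) (hs1 : 1 < s) (hs2 : s ≤ 2)
    (hell : ∀ x y : X, α * ‖x - y‖ ^ s ≤ (E' x - E' y) (x - y)) :
    (∃ m : ℝ, ∀ x : X, m ≤ E x) ∧
      Tendsto E (Filter.comap (fun x : X => ‖x‖) Filter.atTop) Filter.atTop :=
  stmt_2_general E E' hdiff α s hα hs1 hell
end

section
/- Let X be a reflexive Banach space, D a universal dictionary of X (a weakly closed cone with span D dense in X), and E : X → ℝ Fréchet differentiable with locally Lipschitz derivative and X-elliptic. If u* ∈ X satisfies 0 ∈ argmin_{v ∈ D} E(u* + v), then u* is the unique global minimizer of E on X. -/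
/-!
Minimality of `E` along each line `t ↦ u + t • z`, `z ∈ D`, makes `E' u` vanish on the cone `D`,
hence on its dense span, so `u` is a critical point. Ellipticity then gives
`0 ≤ (E' x - E' u) (x - u) = E' x (x - u)`, so `E` is nondecreasing along every ray from `u`;
and a strongly monotone derivative vanishes at most once, which gives uniqueness.
-/

open Filter Topology

section

variable {X : Type*} [NormedAddCommGroup X] [NormedSpace ℝ X] {E : X → ℝ}

lemma HasFDerivAt.hasDerivAt_add_smul {φ : X →L[ℝ] ℝ} {u w : X} {t : ℝ}
    (hE : HasFDerivAt E φ (u + t • w)) :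
    HasDerivAt (fun t : ℝ => E (u + t • w)) (φ w) t := by
  have hline : HasDerivAt (fun t : ℝ => u + t • w) w t := by
    simpa using ((hasDerivAt_id t).smul_const w).const_add u
  exact hE.comp_hasDerivAt t hline

lemma HasFDerivAt.apply_eq_zero_of_forall_le_add_smul {φ : X →L[ℝ] ℝ} {u z : X}
    (hE : HasFDerivAt E φ u) (hmin : ∀ t : ℝ, E u ≤ E (u + t • z)) : φ z = 0 := by
  have hE0 : HasFDerivAt E φ (u + (0 : ℝ) • z) := by simpa using hE
  have hlocal : IsLocalMin (fun t : ℝ => E (u + t • z)) 0 :=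
    Eventually.of_forall fun t => by simpa using hmin t
  exact hlocal.hasDerivAt_eq_zero hE0.hasDerivAt_add_smul

lemma forall_le_of_hasFDerivAt_of_apply_sub_nonneg {E' : X → X →L[ℝ] ℝ} {u : X}
    (hE : ∀ x, HasFDerivAt E (E' x) x) (hdir : ∀ x, 0 ≤ E' x (x - u)) (y : X) :
    E u ≤ E y := by
  set w := y - u
  have hderiv (t : ℝ) : HasDerivAt (fun t : ℝ => E (u + t • w)) (E' (u + t • w) w) t :=
    (hE _).hasDerivAt_add_smul
  have hnonneg (t : ℝ) (ht : 0 < t) : 0 ≤ E' (u + t • w) w := by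
    have h := hdir (u + t • w)
    rw [add_sub_cancel_left, map_smul, smul_eq_mul] at h
    exact nonneg_of_mul_nonneg_right h ht
  have hmono : MonotoneOn (fun t : ℝ => E (u + t • w)) (Set.Ici 0) := by
    refine monotoneOn_of_hasDerivWithinAt_nonneg (convex_Ici 0)
      (fun t _ => (hderiv t).continuousAt.continuousWithinAt)
      (fun t _ => (hderiv t).hasDerivWithinAt) ?_
    rw [interior_Ici]
    exact hnonneg
  simpa [w] using hmono (Set.mem_Ici.mpr le_rfl) (zero_le_one' ℝ) zero_le_one

lemma Function.injective_of_strongly_monotone {F : X → X →L[ℝ] ℝ} {α s : ℝ} (hα : 0 < α)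
    (hF : ∀ x y : X, α * ‖x - y‖ ^ s ≤ (F x - F y) (x - y)) : Function.Injective F := by
  intro x y hxy
  by_contra hne
  have hpos : 0 < α * ‖x - y‖ ^ s :=
    mul_pos hα (Real.rpow_pos_of_pos (norm_pos_iff.mpr (sub_ne_zero.mpr hne)) s)
  have h := hF x y
  rw [hxy, sub_self, zero_apply] at h
  linarith

end

theorem stmt_12_general
{X : Type*} [NormedAddCommGroup X] [NormedSpace ℝ X]
    (E : X → ℝ) (E' : X → X →L[ℝ] ℝ)
    (hdiff : ∀ x, HasFDerivAt E (E' x) x)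
    (α s : ℝ) (hα : 0 < α)
    (hell : ∀ x y : X, α * ‖x - y‖ ^ s ≤ (E' x - E' y) (x - y))
(D : Set X)
    (hcone : ∀ x ∈ D, ∀ l : ℝ, l • x ∈ D)
    (hdense : Dense (Submodule.span ℝ D : Set X))
    (u : X) (hu : ∀ z ∈ D, E u ≤ E (u + z)) :
    (∀ y : X, E u ≤ E y) ∧ ∀ v : X, (∀ y : X, E v ≤ E y) → v = u := by
  have hcrit : E' u = 0 := ContinuousLinearMap.ext_on hdense fun z hz =>
    (hdiff u).apply_eq_zero_of_forall_le_add_smul fun t => hu _ (hcone z hz t)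
  have hmin : ∀ y, E u ≤ E y := by
    refine forall_le_of_hasFDerivAt_of_apply_sub_nonneg hdiff fun x => ?_
    have h := hell x u
    rw [hcrit, sub_zero] at h
    exact (mul_nonneg hα.le (Real.rpow_nonneg (norm_nonneg _) s)).trans h
  refine ⟨hmin, fun v hv => Function.injective_of_strongly_monotone hα hell ?_⟩
  rw [hcrit]
  exact IsLocalMin.hasFDerivAt_eq_zero (Eventually.of_forall hv) (hdiff v)

theorem stmt_12
{X : Type*} [NormedAddCommGroup X] [NormedSpace ℝ X] [CompleteSpace X]
    (hrefl : Function.Surjective (NormedSpace.inclusionInDoubleDual ℝ X))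
    (E : X → ℝ) (E' : X → X →L[ℝ] ℝ)
    (hdiff : ∀ x, HasFDerivAt E (E' x) x)
    (hlip : LocallyLipschitz E')
    (α s : ℝ) (hα : 0 < α) (hs1 : 1 < s) (hs2 : s ≤ 2)
    (hell : ∀ x y : X, α * ‖x - y‖ ^ s ≤ (E' x - E' y) (x - y))
(D : Set X)
    (hcone : ∀ x ∈ D, ∀ l : ℝ, l • x ∈ D)
    (hweak : ∀ (u : ℕ → X) (x : X), (∀ m, u m ∈ D) →
      (∀ φ : X →L[ℝ] ℝ, Tendsto (fun m => φ (u m)) atTop (𝓝 (φ x))) → x ∈ D)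
    (hdense : Dense (Submodule.span ℝ D : Set X))
    (u : X) (hu : ∀ z ∈ D, E u ≤ E (u + z)) :
    (∀ y : X, E u ≤ E y) ∧ ∀ v : X, (∀ y : X, E v ≤ E y) → v = u :=
  stmt_12_general E E' hdiff α s hα hell D hcone hdense u hu
end
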